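/- Let J be a finite set with probability weight function w, let B be a finite set, f : J → B a map, and θ an equivalence relation on J. For each θ-block u, let w(u,b) = ∑_{v ∈ u, f(v)=b} w(v), w(u) = ∑_b w(u,b), and w^maj(u) = max_b w(u,b). For each block u independently, choose a random value F(u) ∈ B where F(u) = f(v) for v chosen from u with probability w(v)/w(u). Define dist(f,F) = ∑_u ∑_{v ∈ u, f(v) ≠ F(u)} w(v). Then E[dist(f,F)] ≤ ∑_u 2(w(u) − w^maj(u)). -/

import Mathlib

open scoped Classical
open Finset

/-! Within a block of weight `W` with value weights `p b`, the expected off-value mass of the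
sampled value is `∑ p b / W * (W - p b) = W - (∑ p b²) / W`. Any single square already
dominates: `p c² ≥ (2 p c - W) W`, so the expectation is at most `2 (W - p c)` for every
value `c`, in particular for the majority value. -/

theorem sum_div_mul_sub_le_two_mul_sub {ι K : Type*} [Field K] [LinearOrder K]
    [IsStrictOrderedRing K] {s : Finset ι} {p : ι → K} {W : K}
    (hsum : ∑ i ∈ s, p i = W) (hW : 0 < W) {c : ι} (hc : c ∈ s) :
    ∑ i ∈ s, p i / W * (W - p i) ≤ 2 * (W - p c) := by
  have hexpand : ∑ i ∈ s, p i / W * (W - p i) = W - (∑ i ∈ s, p i ^ 2) / W := by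
    rw [eq_sub_iff_add_eq, sum_div, ← sum_add_distrib]
    conv_rhs => rw [← hsum]
    refine sum_congr rfl fun i _ => ?_
    field_simp
    ring
  have hsq : p c ^ 2 ≤ ∑ i ∈ s, p i ^ 2 := single_le_sum (fun i _ => sq_nonneg (p i)) hc
  have hcollision : 2 * p c - W ≤ (∑ i ∈ s, p i ^ 2) / W := by
    rw [le_div_iff₀ hW]
    nlinarith [sq_nonneg (p c - W)]
  rw [hexpand]
  linarith

theorem sum_ite_and_ne_eq_sum_sub {J B M : Type*} [Fintype J] [Fintype B] [AddCommGroup M]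
    [DecidableEq B] (P : J → Prop) [DecidablePred P] (f : J → B) (w : J → M) (b : B) :
    (∑ v, if P v ∧ f v ≠ b then w v else 0) =
      ∑ b', (∑ v, if P v ∧ f v = b' then w v else 0) -
        ∑ v, if P v ∧ f v = b then w v else 0 := by
  have hfibres : ∑ b', (∑ v, if P v ∧ f v = b' then w v else 0) = ∑ v, if P v then w v else 0 := by
    rw [sum_comm]
    refine sum_congr rfl fun v _ => ?_
    by_cases hv : P v <;> simp [hv]
  rw [hfibres, eq_sub_iff_add_eq, ← sum_add_distrib]
  refine sum_congr rfl fun v _ => ?_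
  by_cases hv : P v <;> by_cases hb : f v = b <;> simp [hv, hb]

theorem expected_majority_sampling_distance_general {J B : Type} [Fintype J] [Fintype B]
    (s : Setoid J) [Fintype (Quotient s)]
    (w : J → ℝ)
    (f : J → B)
    (wub : Quotient s → B → ℝ)
    (hwub : ∀ u b, wub u b = ∑ v, if Quotient.mk s v = u ∧ f v = b then w v else 0)
    (wu : Quotient s → ℝ) (hwu : ∀ u, wu u = ∑ b, wub u b)
    (hpos : ∀ u, 0 < wu u)
    (fmaj : Quotient s → B) :
    (∑ u : Quotient s, ∑ b : B, (wub u b / wu u) *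
        (∑ v, if Quotient.mk s v = u ∧ f v ≠ b then w v else 0)) ≤
      ∑ u : Quotient s, 2 * (wu u - wub u (fmaj u)) := by
  refine sum_le_sum fun u _ => ?_
  have hoff : ∀ b, (∑ v, if Quotient.mk s v = u ∧ f v ≠ b then w v else 0) = wu u - wub u b := by
    intro b
    rw [sum_ite_and_ne_eq_sum_sub, hwu]
    simp only [hwub]
  simp only [hoff]
  exact sum_div_mul_sub_le_two_mul_sub (hwu u).symm (hpos u) (mem_univ _)

/-- sampling a representative value independently in each θ-block
(with probability proportional to weight) yields
`E[dist(f,F)] ≤ ∑_u 2(w(u) − w^maj(u))`.  By linearity of expectation the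
expected distance is `∑_u ∑_b (w(u,b)/w(u)) · ∑_{v∈u, f v ≠ b} w v`. -/
theorem expected_majority_sampling_distance {J B : Type} [Fintype J] [Fintype B]
    (s : Setoid J) [Fintype (Quotient s)]
    (w : J → ℝ) (hw0 : ∀ v, 0 ≤ w v) (hw1 : ∑ v, w v = 1)
    (f : J → B)
    (wub : Quotient s → B → ℝ)
    (hwub : ∀ u b, wub u b = ∑ v, if Quotient.mk s v = u ∧ f v = b then w v else 0)
    (wu : Quotient s → ℝ) (hwu : ∀ u, wu u = ∑ b, wub u b)
    (hpos : ∀ u, 0 < wu u)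
    (fmaj : Quotient s → B) (hfmaj : ∀ u b, wub u b ≤ wub u (fmaj u)) :
    (∑ u : Quotient s, ∑ b : B, (wub u b / wu u) *
        (∑ v, if Quotient.mk s v = u ∧ f v ≠ b then w v else 0)) ≤
      ∑ u : Quotient s, 2 * (wu u - wub u (fmaj u)) :=
  expected_majority_sampling_distance_general s w f wub hwub wu hwu hpos fmaj
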